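/- The channel max-relative entropy is additive under tensor products: for E₁,E₂ trace-preserving completely positive maps and F₁,F₂ completely positive maps, D_max(E₁⊗E₂ ‖ F₁⊗F₂) = D_max(E₁‖F₁) + D_max(E₂‖F₂). -/

import Mathlib

/-!
Both sides are computed through Choi matrices. For any input `φ = B† B`, the operator
`(id ⊗ (2^l F - E)) φ` is a sum of congruences of the Choi matrix of `2^l F - E`, so the
normalised maximally entangled input is optimal and `D_max(E‖F) = D_max(J_E‖J_F)`. The Choi
matrix of `E₁ ⊗ E₂` is `J_{E₁} ⊗ J_{E₂}` up to reordering the tensor factors, and `D_max` is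
additive on Kronecker products: feasible exponents add, because
`2^(l₁+l₂) σ₁ ⊗ σ₂ - ρ₁ ⊗ ρ₂ = (2^l₁ σ₁ - ρ₁) ⊗ 2^l₂ σ₂ + ρ₁ ⊗ (2^l₂ σ₂ - ρ₂)`, and infeasible
ones add too, as seen by testing on the product of the two witnessing vectors. Trace
preservation makes the Choi matrices of `E₁, E₂` nonzero, so no `D_max` is `-∞` and the sum in
`EReal` is never `⊥ + ⊤`.
-/

open Matrix BigOperators
open scoped ComplexOrder Classical
noncomputable section
namespace QIT
variable {n m : Type*}

def Dmax [Fintype n] (ρ σ : Matrix n n ℂ) : EReal :=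
  sInf ((fun l : ℝ => (l : EReal)) '' {l : ℝ | ((2:ℝ) ^ l • σ - ρ).PosSemidef})

def matLog [Fintype n] [DecidableEq n] (A : Matrix n n ℂ) : Matrix n n ℂ :=
  if h : A.IsHermitian then
    (h.eigenvectorUnitary : Matrix n n ℂ) *
      Matrix.diagonal (fun i => (Real.log (h.eigenvalues i) : ℂ)) *
      (star (h.eigenvectorUnitary : Matrix n n ℂ))
  else 0

def mpow [Fintype n] [DecidableEq n] (A : Matrix n n ℂ) (p : ℝ) : Matrix n n ℂ :=
  if h : A.IsHermitian then
    (h.eigenvectorUnitary : Matrix n n ℂ) *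
      Matrix.diagonal (fun i => ((h.eigenvalues i ^ p : ℝ) : ℂ)) *
      (star (h.eigenvectorUnitary : Matrix n n ℂ))
  else 0

def msqrt [Fintype n] [DecidableEq n] (A : Matrix n n ℂ) : Matrix n n ℂ :=
  if h : A.PosSemidef then
    (h.1.eigenvectorUnitary : Matrix n n ℂ) *
      Matrix.diagonal ((↑) ∘ (fun x : ℝ => Real.sqrt x) ∘ h.1.eigenvalues) *
      (star (h.1.eigenvectorUnitary : Matrix n n ℂ))
  else 0

def SuppLE [Fintype n] (ρ σ : Matrix n n ℂ) : Prop :=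
  ∀ v, σ.mulVec v = 0 → ρ.mulVec v = 0

def relEntR [Fintype n] [DecidableEq n] (ρ σ : Matrix n n ℂ) : ℝ :=
  ((ρ * (matLog ρ - matLog σ)).trace).re

def relEnt [Fintype n] [DecidableEq n] (ρ σ : Matrix n n ℂ) : EReal :=
  if SuppLE ρ σ then ((relEntR ρ σ : ℝ) : EReal) else ⊤

def IsDensity [Fintype n] (ρ : Matrix n n ℂ) : Prop := ρ.PosSemidef ∧ ρ.trace = 1

def matTensorMap {k : Type*} (Φ : Matrix n n ℂ → Matrix m m ℂ)
    (M : Matrix (k × n) (k × n) ℂ) : Matrix (k × m) (k × m) ℂ :=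
  fun p q => Φ (fun a b => M (p.1, a) (q.1, b)) p.2 q.2

def matTensorMapLeft {k : Type*} (Φ : Matrix n n ℂ → Matrix m m ℂ)
    (M : Matrix (n × k) (n × k) ℂ) : Matrix (m × k) (m × k) ℂ :=
  fun p q => Φ (fun a b => M (a, p.2) (b, q.2)) p.1 q.1

def IsCP [Fintype n] [Fintype m] (Φ : Matrix n n ℂ →ₗ[ℂ] Matrix m m ℂ) : Prop :=
  ∀ (k : ℕ) (M : Matrix (Fin k × n) (Fin k × n) ℂ), M.PosSemidef →
    (matTensorMap (⇑Φ) M).PosSemidef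

def IsTP [Fintype n] [Fintype m] (Φ : Matrix n n ℂ →ₗ[ℂ] Matrix m m ℂ) : Prop :=
  ∀ M, (Φ M).trace = M.trace

def DmaxChan [Fintype n] [Fintype m] (E F : Matrix n n ℂ →ₗ[ℂ] Matrix m m ℂ) : EReal :=
  ⨆ φ : {φ : Matrix (n × n) (n × n) ℂ // IsDensity φ},
    Dmax (matTensorMap (⇑E) φ.1) (matTensorMap (⇑F) φ.1)

def DChan [Fintype n] [DecidableEq n] [Fintype m] [DecidableEq m]
    (E F : Matrix n n ℂ →ₗ[ℂ] Matrix m m ℂ) : EReal :=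
  ⨆ φ : {φ : Matrix (n × n) (n × n) ℂ // IsDensity φ},
    relEnt (matTensorMap (⇑E) φ.1) (matTensorMap (⇑F) φ.1)

def DAmort [Fintype n] [DecidableEq n] [Fintype m] [DecidableEq m]
    (E F : Matrix n n ℂ →ₗ[ℂ] Matrix m m ℂ) : EReal :=
  ⨆ r : ℕ, ⨆ φ : {φ : Matrix (Fin r × n) (Fin r × n) ℂ // IsDensity φ},
    ⨆ ω : {ω : Matrix (Fin r × n) (Fin r × n) ℂ // IsDensity ω},
      relEnt (matTensorMap (⇑E) φ.1) (matTensorMap (⇑F) ω.1) - relEnt φ.1 ω.1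

def traceNorm [Fintype n] [DecidableEq n] (A : Matrix n n ℂ) : ℝ :=
  ((msqrt (Aᴴ * A)).trace).re

def genFid [Fintype n] [DecidableEq n] (ρ σ : Matrix n n ℂ) : ℝ :=
  (traceNorm (msqrt ρ * msqrt σ) +
    Real.sqrt ((1 - ρ.trace.re) * (1 - σ.trace.re))) ^ 2

def pdist [Fintype n] [DecidableEq n] (ρ σ : Matrix n n ℂ) : ℝ :=
  Real.sqrt (1 - genFid ρ σ)

def tensorPow [Fintype n] (ρ : Matrix n n ℂ) (k : ℕ) :
    Matrix (Fin k → n) (Fin k → n) ℂ :=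
  fun v w => ∏ i, ρ (v i) (w i)

def chanPow [Fintype n] [DecidableEq n] [Fintype m]
    (E : Matrix n n ℂ →ₗ[ℂ] Matrix m m ℂ) (k : ℕ)
    (M : Matrix (Fin k → n) (Fin k → n) ℂ) : Matrix (Fin k → m) (Fin k → m) ℂ :=
  fun v w => ∑ x : Fin k → n, ∑ y : Fin k → n,
    (∏ i, E (Matrix.single (x i) (y i) 1) (v i) (w i)) * M x y


/-- The tensor product `Φ₁ ⊗ Φ₂` of two maps on matrices, obtained as
`(Φ₁ ⊗ id) ∘ (id ⊗ Φ₂)`. -/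
def tensorChan {n₁ n₂ m₁ m₂ : Type*}
    (Φ₁ : Matrix n₁ n₁ ℂ → Matrix m₁ m₁ ℂ) (Φ₂ : Matrix n₂ n₂ ℂ → Matrix m₂ m₂ ℂ)
    (M : Matrix (n₁ × n₂) (n₁ × n₂) ℂ) : Matrix (m₁ × m₂) (m₁ × m₂) ℂ :=
  matTensorMapLeft Φ₁ (matTensorMap Φ₂ M)

open scoped Kronecker

section QuadraticForm

variable [Fintype n]

lemma re_star_dotProduct_smul_sub_mulVec (A B : Matrix n n ℂ) (r : ℝ) (x : n → ℂ) :
    (star x ⬝ᵥ (r • A - B) *ᵥ x).re =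
      r * (star x ⬝ᵥ A *ᵥ x).re - (star x ⬝ᵥ B *ᵥ x).re := by
  simp [sub_mulVec, smul_mulVec, dotProduct_sub, dotProduct_smul]

lemma exists_re_dotProduct_neg_of_not_posSemidef {A : Matrix n n ℂ} (hA : A.IsHermitian)
    (h : ¬A.PosSemidef) : ∃ x, (star x ⬝ᵥ A *ᵥ x).re < 0 := by
  by_contra! hx
  exact h <| .of_dotProduct_mulVec_nonneg hA fun x =>
    Complex.nonneg_iff.mpr ⟨hx x, (hA.im_star_dotProduct_mulVec_self x).symm⟩

end QuadraticForm

section Dmax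

variable [Fintype n]

lemma Dmax_le_of_posSemidef {ρ σ : Matrix n n ℂ} {l : ℝ}
    (h : ((2:ℝ) ^ l • σ - ρ).PosSemidef) : Dmax ρ σ ≤ l :=
  sInf_le ⟨l, h, rfl⟩

lemma le_Dmax {ρ σ : Matrix n n ℂ} {a : EReal}
    (h : ∀ l : ℝ, ((2:ℝ) ^ l • σ - ρ).PosSemidef → a ≤ l) : a ≤ Dmax ρ σ :=
  le_sInf <| by rintro _ ⟨l, hl, rfl⟩; exact h l hl

lemma not_posSemidef_of_lt_Dmax {ρ σ : Matrix n n ℂ} {l : ℝ} (h : (l : EReal) < Dmax ρ σ) :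
    ¬((2:ℝ) ^ l • σ - ρ).PosSemidef :=
  fun hl => (Dmax_le_of_posSemidef hl).not_gt h

lemma exists_posSemidef_of_Dmax_lt {ρ σ : Matrix n n ℂ} {a : EReal} (h : Dmax ρ σ < a) :
    ∃ l : ℝ, ((2:ℝ) ^ l • σ - ρ).PosSemidef ∧ (l : EReal) < a := by
  obtain ⟨_, ⟨l, hl, rfl⟩, hla⟩ := sInf_lt_iff.mp h
  exact ⟨l, hl, hla⟩

lemma Dmax_smul_smul {c : ℝ} (hc : 0 < c) (ρ σ : Matrix n n ℂ) :
    Dmax (c • ρ) (c • σ) = Dmax ρ σ := by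
  have key : ∀ l : ℝ, ((2:ℝ) ^ l • (c • σ) - c • ρ).PosSemidef ↔
      ((2:ℝ) ^ l • σ - ρ).PosSemidef := fun l => by
    rw [smul_comm, ← smul_sub]
    refine ⟨fun h => ?_, fun h => h.smul hc.le⟩
    simpa [smul_smul, hc.ne'] using h.smul (inv_nonneg.mpr hc.le)
  simp only [Dmax, key]

lemma Dmax_submatrix_equiv {k : Type*} [Fintype k] (e : k ≃ n) (ρ σ : Matrix n n ℂ) :
    Dmax (ρ.submatrix e e) (σ.submatrix e e) = Dmax ρ σ := by
  have key : ∀ l : ℝ, ((2:ℝ) ^ l • σ.submatrix e e - ρ.submatrix e e).PosSemidef ↔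
      ((2:ℝ) ^ l • σ - ρ).PosSemidef := fun l =>
    posSemidef_submatrix_equiv (M := (2:ℝ) ^ l • σ - ρ) e
  simp only [Dmax, key]

/-- `Dmax ρ σ > -∞` because any feasible `l` satisfies `2 ^ l * tr σ ≥ tr ρ > 0`. -/
lemma bot_lt_Dmax {ρ σ : Matrix n n ℂ} (hρ : ρ.PosSemidef) (hρ0 : ρ ≠ 0) : ⊥ < Dmax ρ σ := by
  have htr : 0 < ρ.trace.re := (Complex.pos_iff.mp <|
    hρ.trace_nonneg.lt_of_ne (Ne.symm <| mt hρ.trace_eq_zero_iff.mp hρ0)).1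
  have trace_le : ∀ l : ℝ, ((2:ℝ) ^ l • σ - ρ).PosSemidef → ρ.trace.re ≤ 2 ^ l * σ.trace.re :=
    fun l hl => by
      have h := (Complex.nonneg_iff.mp hl.trace_nonneg).1
      simp only [trace_sub, trace_smul, Complex.sub_re, Complex.real_smul, Complex.re_ofReal_mul,
        sub_nonneg] at h
      exact h
  by_cases hfeas : ∃ l : ℝ, ((2:ℝ) ^ l • σ - ρ).PosSemidef
  · obtain ⟨l₀, hl₀⟩ := hfeas
    have hσ : 0 < σ.trace.re :=
      pos_of_mul_pos_right (htr.trans_le (trace_le l₀ hl₀)) (by positivity)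
    refine (EReal.bot_lt_coe (Real.logb 2 (ρ.trace.re / σ.trace.re))).trans_le
      (le_Dmax fun l hl => ?_)
    have : ρ.trace.re / σ.trace.re ≤ 2 ^ l := by
      rw [div_le_iff₀ hσ]; exact trace_le l hl
    exact_mod_cast (Real.logb_le_iff_le_rpow one_lt_two (by positivity)).mpr this
  · push Not at hfeas
    have : Dmax ρ σ = ⊤ := top_le_iff.mp (le_Dmax fun l hl => absurd hl (hfeas l))
    exact this ▸ bot_lt_top

end Dmax

section Kronecker

variable {α β : Type*} [Fintype α] [Fintype β]

lemma posSemidef_smul_kronecker_sub {ρ₁ σ₁ : Matrix α α ℂ} {ρ₂ σ₂ : Matrix β β ℂ}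
    (hρ₁ : ρ₁.PosSemidef) (hσ₂ : σ₂.PosSemidef) {r s : ℝ} (hs : 0 ≤ s)
    (h₁ : (r • σ₁ - ρ₁).PosSemidef) (h₂ : (s • σ₂ - ρ₂).PosSemidef) :
    ((r * s) • (σ₁ ⊗ₖ σ₂) - ρ₁ ⊗ₖ ρ₂).PosSemidef := by
  have key : (r * s) • (σ₁ ⊗ₖ σ₂) - ρ₁ ⊗ₖ ρ₂ =
      (r • σ₁ - ρ₁) ⊗ₖ (s • σ₂) + ρ₁ ⊗ₖ (s • σ₂ - ρ₂) := by
    ext ⟨a, b⟩ ⟨c, d⟩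
    simp only [Matrix.sub_apply, Matrix.add_apply, Matrix.smul_apply, kroneckerMap_apply,
      Complex.real_smul, Complex.ofReal_mul]
    ring
  rw [key]
  exact (h₁.kronecker (hσ₂.smul hs)).add (hρ₁.kronecker h₂)

lemma dotProduct_kronecker_mulVec {R : Type*} [CommSemiring R] (A : Matrix α α R)
    (B : Matrix β β R) (u v : α → R) (u' v' : β → R) :
    (fun p : α × β => u p.1 * u' p.2) ⬝ᵥ (A ⊗ₖ B) *ᵥ (fun p => v p.1 * v' p.2) =
      (u ⬝ᵥ A *ᵥ v) * (u' ⬝ᵥ B *ᵥ v') := by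
  simp only [dotProduct, mulVec, Fintype.sum_prod_type, kroneckerMap_apply]
  rw [Finset.sum_mul_sum]
  refine Finset.sum_congr rfl fun a _ => Finset.sum_congr rfl fun b _ => ?_
  simp only [Finset.mul_sum, Finset.sum_mul]
  rw [Finset.sum_comm]
  exact Finset.sum_congr rfl fun c _ => Finset.sum_congr rfl fun d _ => by ring

lemma re_star_dotProduct_kronecker_mulVec {A : Matrix α α ℂ} (hA : A.IsHermitian)
    (B : Matrix β β ℂ) (v : α → ℂ) (w : β → ℂ) :
    (star (fun p : α × β => v p.1 * w p.2) ⬝ᵥ (A ⊗ₖ B) *ᵥ (fun p => v p.1 * w p.2)).re =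
      (star v ⬝ᵥ A *ᵥ v).re * (star w ⬝ᵥ B *ᵥ w).re := by
  have hstar : star (fun p : α × β => v p.1 * w p.2) = fun p => star v p.1 * star w p.2 :=
    funext fun p => star_mul' _ _
  have him : (star v ⬝ᵥ A *ᵥ v).im = 0 := hA.im_star_dotProduct_mulVec_self v
  rw [hstar, dotProduct_kronecker_mulVec, Complex.mul_re, him, zero_mul, sub_zero]

/-- Test `t • σ₁ ⊗ σ₂ - ρ₁ ⊗ ρ₂` on `v ⊗ w`, where `v` and `w` witness that `r • σ₁ - ρ₁` and
`s • σ₂ - ρ₂` are not positive semidefinite. -/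
lemma mul_lt_of_posSemidef_smul_kronecker_sub {ρ₁ σ₁ : Matrix α α ℂ} {ρ₂ σ₂ : Matrix β β ℂ}
    (hρ₁ : ρ₁.IsHermitian) (hρ₂ : ρ₂.IsHermitian) (hσ₁ : σ₁.PosSemidef) (hσ₂ : σ₂.PosSemidef)
    {r s t : ℝ} (hr : 0 ≤ r) (hs : 0 ≤ s) (ht : (t • (σ₁ ⊗ₖ σ₂) - ρ₁ ⊗ₖ ρ₂).PosSemidef)
    (h₁ : ¬(r • σ₁ - ρ₁).PosSemidef) (h₂ : ¬(s • σ₂ - ρ₂).PosSemidef) : r * s < t := by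
  obtain ⟨v, hv⟩ := exists_re_dotProduct_neg_of_not_posSemidef
    ((hσ₁.1.smul (IsSelfAdjoint.all r)).sub hρ₁) h₁
  obtain ⟨w, hw⟩ := exists_re_dotProduct_neg_of_not_posSemidef
    ((hσ₂.1.smul (IsSelfAdjoint.all s)).sub hρ₂) h₂
  have hvw := ht.re_dotProduct_nonneg (fun p => v p.1 * w p.2)
  rw [RCLike.re_to_complex, re_star_dotProduct_smul_sub_mulVec,
    re_star_dotProduct_kronecker_mulVec hσ₁.1, re_star_dotProduct_kronecker_mulVec hρ₁] at hvw
  rw [re_star_dotProduct_smul_sub_mulVec] at hv hw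
  have hb₁ : 0 ≤ (star v ⬝ᵥ σ₁ *ᵥ v).re := hσ₁.re_dotProduct_nonneg v
  have hb₂ : 0 ≤ (star w ⬝ᵥ σ₂ *ᵥ w).re := hσ₂.re_dotProduct_nonneg w
  set a₁ := (star v ⬝ᵥ ρ₁ *ᵥ v).re
  set b₁ := (star v ⬝ᵥ σ₁ *ᵥ v).re
  set a₂ := (star w ⬝ᵥ ρ₂ *ᵥ w).re
  set b₂ := (star w ⬝ᵥ σ₂ *ᵥ w).re
  have hprod : r * b₁ * (s * b₂) < a₁ * a₂ :=
    mul_lt_mul'' (by linarith) (by linarith) (mul_nonneg hr hb₁) (mul_nonneg hs hb₂)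
  have : r * s * (b₁ * b₂) < t * (b₁ * b₂) := by linarith
  exact lt_of_mul_lt_mul_right this (mul_nonneg hb₁ hb₂)

theorem Dmax_kronecker {ρ₁ σ₁ : Matrix α α ℂ} {ρ₂ σ₂ : Matrix β β ℂ} (hρ₁ : ρ₁.PosSemidef)
    (hρ₂ : ρ₂.PosSemidef) (hσ₁ : σ₁.PosSemidef) (hσ₂ : σ₂.PosSemidef) (hρ₁0 : ρ₁ ≠ 0)
    (hρ₂0 : ρ₂ ≠ 0) :
    Dmax (ρ₁ ⊗ₖ ρ₂) (σ₁ ⊗ₖ σ₂) = Dmax ρ₁ σ₁ + Dmax ρ₂ σ₂ := by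
  refine le_antisymm ?_ ?_
  · have h₁ : Dmax ρ₁ σ₁ ≠ ⊥ := (bot_lt_Dmax hρ₁ hρ₁0).ne'
    have h₂ : Dmax ρ₂ σ₂ ≠ ⊥ := (bot_lt_Dmax hρ₂ hρ₂0).ne'
    refine EReal.le_add_of_forall_gt (.inl h₁) (.inr h₂) fun a ha b hb => ?_
    obtain ⟨l₁, hl₁, hl₁a⟩ := exists_posSemidef_of_Dmax_lt ha
    obtain ⟨l₂, hl₂, hl₂b⟩ := exists_posSemidef_of_Dmax_lt hb
    have hl := posSemidef_smul_kronecker_sub hρ₁ hσ₂ (by positivity) hl₁ hl₂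
    rw [← Real.rpow_add two_pos] at hl
    calc Dmax (ρ₁ ⊗ₖ ρ₂) (σ₁ ⊗ₖ σ₂) ≤ ((l₁ + l₂ : ℝ) : EReal) := Dmax_le_of_posSemidef hl
      _ ≤ a + b := by rw [EReal.coe_add]; exact add_le_add hl₁a.le hl₂b.le
  · refine EReal.add_le_of_forall_lt fun a ha b hb => le_Dmax fun l hl => ?_
    obtain ⟨x₁, hax, hx₁⟩ := EReal.lt_iff_exists_real_btwn.mp ha
    obtain ⟨x₂, hbx, hx₂⟩ := EReal.lt_iff_exists_real_btwn.mp hb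
    have hx := mul_lt_of_posSemidef_smul_kronecker_sub hρ₁.1 hρ₂.1 hσ₁ hσ₂ (by positivity)
      (by positivity) hl (not_posSemidef_of_lt_Dmax hx₁) (not_posSemidef_of_lt_Dmax hx₂)
    rw [← Real.rpow_add two_pos, Real.rpow_lt_rpow_left_iff one_lt_two] at hx
    calc a + b ≤ ((x₁ + x₂ : ℝ) : EReal) := by rw [EReal.coe_add]; exact add_le_add hax.le hbx.le
      _ ≤ l := mod_cast hx.le

end Kronecker

def choi (Φ : Matrix n n ℂ → Matrix m m ℂ) : Matrix (n × m) (n × m) ℂ :=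
  Matrix.of fun p q => Φ (Matrix.single p.1 q.1 1) p.2 q.2

lemma matTensorMap_smul_sub (E F : Matrix n n ℂ →ₗ[ℂ] Matrix m m ℂ) (r : ℝ) {k : Type*}
    (M : Matrix (k × n) (k × n) ℂ) :
    matTensorMap ⇑(r • F - E) M = r • matTensorMap F M - matTensorMap E M :=
  rfl

lemma choi_smul_sub (E F : Matrix n n ℂ →ₗ[ℂ] Matrix m m ℂ) (r : ℝ) :
    choi ⇑(r • F - E) = r • choi F - choi E :=
  rfl

section Choi

variable [Fintype n]

lemma matTensorMap_apply_eq_sum_choi (Φ : Matrix n n ℂ →ₗ[ℂ] Matrix m m ℂ) {k : Type*}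
    (M : Matrix (k × n) (k × n) ℂ) (i i' : k) (c c' : m) :
    matTensorMap Φ M (i, c) (i', c') = ∑ a, ∑ b, M (i, a) (i', b) * choi Φ (a, c) (b, c') := by
  change Φ (Matrix.of fun a b => M (i, a) (i', b)) c c' = _
  have hsum : (Matrix.of fun a b => M (i, a) (i', b) : Matrix n n ℂ) =
      ∑ a, ∑ b, M (i, a) (i', b) • Matrix.single a b 1 := by
    simp only [smul_single, smul_eq_mul, mul_one]
    exact matrix_eq_sum_single _
  simp only [hsum, map_sum, map_smul, Matrix.sum_apply, Matrix.smul_apply, smul_eq_mul, choi,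
    of_apply]

lemma matTensorMap_smul (Φ : Matrix n n ℂ →ₗ[ℂ] Matrix m m ℂ) (r : ℝ) {k : Type*}
    (M : Matrix (k × n) (k × n) ℂ) : matTensorMap Φ (r • M) = r • matTensorMap Φ M := by
  ext ⟨i, c⟩ ⟨i', c'⟩
  simp only [matTensorMap_apply_eq_sum_choi, Matrix.smul_apply, Finset.smul_sum, smul_mul_assoc]

lemma kronecker_one_mul_mul_conjTranspose_apply {k : Type*} [Fintype m] [Fintype k]
    (X : Matrix k n ℂ) (J : Matrix (n × m) (n × m) ℂ) (i i' : k) (c c' : m) :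
    ((X ⊗ₖ (1 : Matrix m m ℂ)) * J * (X ⊗ₖ (1 : Matrix m m ℂ))ᴴ) (i, c) (i', c') =
      ∑ a, ∑ b, X i a * J (a, c) (b, c') * star (X i' b) := by
  simp only [mul_apply, conjTranspose_apply, kroneckerMap_apply, one_apply,
    apply_ite (star : ℂ → ℂ), star_zero, mul_ite, mul_one, mul_zero, ite_mul, zero_mul,
    Fintype.sum_prod_type, Finset.sum_ite_eq, Finset.mem_univ, if_true, Finset.sum_mul]
  exact Finset.sum_comm

lemma posSemidef_matTensorMap_of_posSemidef_choi [Fintype m] {k : Type*} [Fintype k]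
    {Φ : Matrix n n ℂ →ₗ[ℂ] Matrix m m ℂ} (hΦ : (choi Φ).PosSemidef)
    {M : Matrix (k × n) (k × n) ℂ} (hM : M.PosSemidef) : (matTensorMap Φ M).PosSemidef := by
  open scoped MatrixOrder in
  obtain ⟨B, rfl⟩ := CStarAlgebra.nonneg_iff_eq_star_mul_self.mp hM.nonneg
  let X : k × n → Matrix k n ℂ := fun t => Matrix.of fun i a => star (B t (i, a))
  have key : matTensorMap Φ (star B * B) =
      ∑ t, (X t ⊗ₖ (1 : Matrix m m ℂ)) * choi Φ * (X t ⊗ₖ (1 : Matrix m m ℂ))ᴴ := by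
    ext ⟨i, c⟩ ⟨i', c'⟩
    simp only [matTensorMap_apply_eq_sum_choi, Matrix.sum_apply,
      kronecker_one_mul_mul_conjTranspose_apply]
    simp only [star_eq_conjTranspose, mul_apply, conjTranspose_apply, X, of_apply, star_star,
      Finset.sum_mul]
    refine (Fintype.sum_congr _ _ fun a => Finset.sum_comm).trans (Finset.sum_comm.trans ?_)
    exact Fintype.sum_congr _ _ fun _ => Fintype.sum_congr _ _ fun _ =>
      Fintype.sum_congr _ _ fun _ => mul_right_comm _ _ _
  rw [key]
  exact posSemidef_sum _ fun t _ => hΦ.mul_mul_conjTranspose_same _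

end Choi

/-- The unnormalised maximally entangled state `∑ i j, |i i⟩⟨j j|`. -/
def maxEntangled (n : Type*) : Matrix (n × n) (n × n) ℂ :=
  vecMulVec (fun p => if p.1 = p.2 then 1 else 0) (star fun p => if p.1 = p.2 then 1 else 0)

lemma posSemidef_maxEntangled [Fintype n] : (maxEntangled n).PosSemidef :=
  posSemidef_vecMulVec_self_star _

lemma matTensorMap_maxEntangled (Φ : Matrix n n ℂ → Matrix m m ℂ) :
    matTensorMap Φ (maxEntangled n) = choi Φ := by
  ext ⟨i, c⟩ ⟨i', c'⟩
  change Φ _ c c' = Φ _ c c'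
  congr 1
  ext a b
  by_cases ha : i = a <;> by_cases hb : i' = b <;>
    simp [maxEntangled, vecMulVec_apply, single, ha, hb]

lemma trace_maxEntangled [Fintype n] : (maxEntangled n).trace = Fintype.card n := by
  simp [maxEntangled, trace, vecMulVec_apply, Fintype.sum_prod_type]

lemma isDensity_maxEntangled [Fintype n] [Nonempty n] :
    IsDensity ((Fintype.card n : ℝ)⁻¹ • maxEntangled n) := by
  refine ⟨posSemidef_maxEntangled.smul (by positivity), ?_⟩
  rw [trace_smul, trace_maxEntangled, Complex.real_smul]
  push_cast
  exact inv_mul_cancel₀ (Nat.cast_ne_zero.mpr Fintype.card_ne_zero)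

lemma matTensorMap_submatrix_prodCongr {k k' : Type*} (Φ : Matrix n n ℂ → Matrix m m ℂ)
    (e : k' ≃ k) (M : Matrix (k × n) (k × n) ℂ) :
    matTensorMap Φ (M.submatrix (e.prodCongr (.refl n)) (e.prodCongr (.refl n))) =
      (matTensorMap Φ M).submatrix (e.prodCongr (.refl m)) (e.prodCongr (.refl m)) :=
  rfl

lemma IsCP.posSemidef_choi [Fintype n] [Fintype m] {Φ : Matrix n n ℂ →ₗ[ℂ] Matrix m m ℂ}
    (hΦ : IsCP Φ) : (choi Φ).PosSemidef := by
  have h := hΦ _ _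
    (posSemidef_maxEntangled.submatrix ((Fintype.equivFin n).symm.prodCongr (.refl n)))
  rwa [matTensorMap_submatrix_prodCongr, matTensorMap_maxEntangled,
    posSemidef_submatrix_equiv] at h

lemma IsTP.trace_choi [Fintype n] [Fintype m] {Φ : Matrix n n ℂ →ₗ[ℂ] Matrix m m ℂ}
    (hΦ : IsTP Φ) : (choi Φ).trace = Fintype.card n := by
  have hblock : ∀ a, ∑ c, (choi Φ).diag (a, c) = 1 := fun a =>
    (hΦ (single a a 1)).trans (trace_single_eq_same a 1)
  rw [trace, Fintype.sum_prod_type, Fintype.sum_congr _ _ hblock, Finset.sum_const,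
    Finset.card_univ, nsmul_one]

lemma IsTP.choi_ne_zero [Fintype n] [Nonempty n] [Fintype m]
    {Φ : Matrix n n ℂ →ₗ[ℂ] Matrix m m ℂ} (hΦ : IsTP Φ) : choi Φ ≠ 0 := fun h => by
  have h0 := hΦ.trace_choi
  rw [h, trace_zero, eq_comm, Nat.cast_eq_zero] at h0
  exact Fintype.card_ne_zero h0

lemma DmaxChan_le_Dmax_choi [Fintype n] [Fintype m] (E F : Matrix n n ℂ →ₗ[ℂ] Matrix m m ℂ) :
    DmaxChan E F ≤ Dmax (choi E) (choi F) :=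
  iSup_le fun φ => le_Dmax fun l hl => Dmax_le_of_posSemidef <| by
    rw [← matTensorMap_smul_sub]
    exact posSemidef_matTensorMap_of_posSemidef_choi (by rwa [choi_smul_sub]) φ.2.1

theorem DmaxChan_eq_Dmax_choi [Fintype n] [Nonempty n] [Fintype m]
    (E F : Matrix n n ℂ →ₗ[ℂ] Matrix m m ℂ) : DmaxChan E F = Dmax (choi E) (choi F) := by
  refine (DmaxChan_le_Dmax_choi E F).antisymm ?_
  have hc : (0 : ℝ) < (Fintype.card n : ℝ)⁻¹ := by positivity
  calc Dmax (choi E) (choi F)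
      = Dmax (matTensorMap E ((Fintype.card n : ℝ)⁻¹ • maxEntangled n))
          (matTensorMap F ((Fintype.card n : ℝ)⁻¹ • maxEntangled n)) := by
        rw [matTensorMap_smul, matTensorMap_smul, matTensorMap_maxEntangled,
          matTensorMap_maxEntangled, Dmax_smul_smul hc]
    _ ≤ DmaxChan E F := le_iSup (fun φ : {φ // IsDensity φ} =>
        Dmax (matTensorMap E φ.1) (matTensorMap F φ.1)) ⟨_, isDensity_maxEntangled⟩

lemma DmaxChan_of_isEmpty [Fintype n] [IsEmpty n] [Fintype m]
    (E F : Matrix n n ℂ →ₗ[ℂ] Matrix m m ℂ) : DmaxChan E F = ⊥ := by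
  have : IsEmpty {φ : Matrix (n × n) (n × n) ℂ // IsDensity φ} :=
    ⟨fun φ => zero_ne_one (α := ℂ) (by simpa [trace] using φ.2.2)⟩
  exact iSup_of_empty _

lemma matTensorMap_kronecker {k : Type*} (Φ : Matrix n n ℂ →ₗ[ℂ] Matrix m m ℂ)
    (A : Matrix k k ℂ) (B : Matrix n n ℂ) : matTensorMap Φ (A ⊗ₖ B) = A ⊗ₖ Φ B := by
  ext ⟨i, c⟩ ⟨i', c'⟩
  exact congrFun₂ (map_smul Φ (A i i') B) c c'

lemma matTensorMapLeft_kronecker {k : Type*} (Φ : Matrix n n ℂ →ₗ[ℂ] Matrix m m ℂ)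
    (A : Matrix n n ℂ) (B : Matrix k k ℂ) : matTensorMapLeft Φ (A ⊗ₖ B) = Φ A ⊗ₖ B := by
  ext ⟨c, i⟩ ⟨c', i'⟩
  have hblock : (of fun a b => A a b * B i i' : Matrix n n ℂ) = B i i' • A := by
    ext a b
    exact mul_comm _ _
  change Φ (of fun a b => A a b * B i i') c c' = Φ A c c' * B i i'
  rw [hblock, map_smul]
  exact mul_comm _ _

section Tensor

variable {n₁ n₂ m₁ m₂ : Type*}

lemma tensorChan_kronecker (Φ₁ : Matrix n₁ n₁ ℂ →ₗ[ℂ] Matrix m₁ m₁ ℂ)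
    (Φ₂ : Matrix n₂ n₂ ℂ →ₗ[ℂ] Matrix m₂ m₂ ℂ) (A : Matrix n₁ n₁ ℂ) (B : Matrix n₂ n₂ ℂ) :
    tensorChan Φ₁ Φ₂ (A ⊗ₖ B) = Φ₁ A ⊗ₖ Φ₂ B := by
  rw [tensorChan, matTensorMap_kronecker, matTensorMapLeft_kronecker]

lemma choi_tensorChan (Φ₁ : Matrix n₁ n₁ ℂ →ₗ[ℂ] Matrix m₁ m₁ ℂ)
    (Φ₂ : Matrix n₂ n₂ ℂ →ₗ[ℂ] Matrix m₂ m₂ ℂ) :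
    choi (tensorChan Φ₁ Φ₂) = (choi Φ₁ ⊗ₖ choi Φ₂).submatrix
      (Equiv.prodProdProdComm n₁ n₂ m₁ m₂) (Equiv.prodProdProdComm n₁ n₂ m₁ m₂) := by
  ext ⟨⟨a₁, a₂⟩, c₁, c₂⟩ ⟨⟨b₁, b₂⟩, d₁, d₂⟩
  have hsingle : choi (tensorChan Φ₁ Φ₂) ((a₁, a₂), c₁, c₂) ((b₁, b₂), d₁, d₂) =
      tensorChan Φ₁ Φ₂ (single a₁ b₁ 1 ⊗ₖ single a₂ b₂ 1) (c₁, c₂) (d₁, d₂) := by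
    rw [single_kronecker_single, one_mul, choi, of_apply]
    -- the two `single`s carry different (classical vs. product) `DecidableEq` instances
    congr!
  rw [hsingle, tensorChan_kronecker]
  rfl

end Tensor

/-- **Additivity of the channel max-relative entropy under tensor products:**
for trace-preserving completely positive `E₁, E₂` and completely positive `F₁, F₂`,
`D_max(E₁ ⊗ E₂ ‖ F₁ ⊗ F₂) = D_max(E₁‖F₁) + D_max(E₂‖F₂)`. -/
theorem DmaxChan_additive_tensor {n₁ n₂ m₁ m₂ : Type*}
    [Fintype n₁] [Fintype n₂] [Fintype m₁] [Fintype m₂]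
    (E₁ F₁ : Matrix n₁ n₁ ℂ →ₗ[ℂ] Matrix m₁ m₁ ℂ)
    (E₂ F₂ : Matrix n₂ n₂ ℂ →ₗ[ℂ] Matrix m₂ m₂ ℂ)
    (E₁₂ F₁₂ : Matrix (n₁ × n₂) (n₁ × n₂) ℂ →ₗ[ℂ] Matrix (m₁ × m₂) (m₁ × m₂) ℂ)
    (hE₁₂ : ∀ M, E₁₂ M = tensorChan (⇑E₁) (⇑E₂) M)
    (hF₁₂ : ∀ M, F₁₂ M = tensorChan (⇑F₁) (⇑F₂) M)
    (hE₁ : IsCP E₁) (hE₁TP : IsTP E₁) (hF₁ : IsCP F₁)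
    (hE₂ : IsCP E₂) (hE₂TP : IsTP E₂) (hF₂ : IsCP F₂) :
    DmaxChan E₁₂ F₁₂ = DmaxChan E₁ F₁ + DmaxChan E₂ F₂ := by
  rcases isEmpty_or_nonempty n₁ with _ | _
  · rw [DmaxChan_of_isEmpty E₁, DmaxChan_of_isEmpty E₁₂, EReal.bot_add]
  rcases isEmpty_or_nonempty n₂ with _ | _
  · rw [DmaxChan_of_isEmpty E₂, DmaxChan_of_isEmpty E₁₂, EReal.add_bot]
  rw [DmaxChan_eq_Dmax_choi, DmaxChan_eq_Dmax_choi, DmaxChan_eq_Dmax_choi, funext hE₁₂,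
    funext hF₁₂, choi_tensorChan, choi_tensorChan, Dmax_submatrix_equiv]
  exact Dmax_kronecker hE₁.posSemidef_choi hE₂.posSemidef_choi hF₁.posSemidef_choi
    hF₂.posSemidef_choi hE₁TP.choi_ne_zero hE₂TP.choi_ne_zero

end QIT
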